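/- arXiv:1703.05296 — 2 statements merged into one kernel-verified Lean document; each statement's English description precedes it below -/
import Mathlib

section
/- The following identities hold in R: D·α − α·D = (α·t − 1)·x·α and D·β − β·D = β·x·(1 − t·β). (These compute the differential of the elements α and β.) -/
/-!
Both identities are the derivation rule for an inverse, `[D, u⁻¹] = u⁻¹ [u, D] u⁻¹`, applied to
`u = 1 + s x` and `u = 1 + x s`. The commutators `[u, D]` follow from `D s + s D = 1 - t` and the
Maurer–Cartan equation `D x + x D + x² = 0`; multiplying by `α` (resp. `β`) on the outside then
absorbs the remaining `s x` (resp. `x s`) term.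
-/

section Perturbation

variable {R : Type*} [Ring R]

theorem IsUnit.one_add_mul_swap {a b : R} (h : IsUnit (1 + a * b)) : IsUnit (1 + b * a) := by
  have hl : Ring.inverse (1 + a * b) * (1 + a * b) = 1 := Ring.inverse_mul_cancel _ h
  have hr : (1 + a * b) * Ring.inverse (1 + a * b) = 1 := Ring.mul_inverse_cancel _ h
  refine ⟨⟨1 + b * a, 1 - b * Ring.inverse (1 + a * b) * a, ?_, ?_⟩, rfl⟩
  · linear_combination (norm := noncomm_ring) -(b * hr * a)
  · linear_combination (norm := noncomm_ring) -(b * hl * a)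

theorem lie_inverse {u : R} (hu : IsUnit u) (D : R) :
    ⁅D, Ring.inverse u⁆ = Ring.inverse u * ⁅u, D⁆ * Ring.inverse u := by
  have hl : Ring.inverse u * u = 1 := Ring.inverse_mul_cancel _ hu
  have hr : u * Ring.inverse u = 1 := Ring.mul_inverse_cancel _ hu
  simp only [Ring.lie_def]
  linear_combination (norm := noncomm_ring) Ring.inverse u * D * hr - hl * (D * Ring.inverse u)

theorem mul_add_add_mul_self_eq_zero {D x : R} (hDD : D * D = 0)
    (hMC : (D + x) * (D + x) = 0) : D * x + x * D + x * x = 0 := by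
  linear_combination (norm := noncomm_ring) hMC - hDD

variable {s t x D : R} (hDs : D * s + s * D = 1 - t) (hMC : D * x + x * D + x * x = 0)
include hDs hMC

theorem lie_one_add_mul : ⁅1 + s * x, D⁆ = (t - 1 - s * x) * x := by
  rw [Ring.lie_def]
  linear_combination (norm := noncomm_ring) s * hMC - hDs * x

theorem lie_one_add_mul_swap : ⁅1 + x * s, D⁆ = x * (1 - t + x * s) := by
  rw [Ring.lie_def]
  linear_combination (norm := noncomm_ring) x * hDs - hMC * s

end Perturbation

theorem d_alpha_d_beta_general {R : Type*} [Ring R] (s t x D : R)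
    (hu : IsUnit (1 + s * x))
    (hDD : D * D = 0) (hDs : D * s + s * D = 1 - t)
    (hMC : (D + x) * (D + x) = 0) :
    let α := Ring.inverse (1 + s * x)
    let β := Ring.inverse (1 + x * s)
    D * α - α * D = (α * t - 1) * x * α ∧
      D * β - β * D = β * x * (1 - t * β) := by
  intro α β
  have hu' : IsUnit (1 + x * s) := hu.one_add_mul_swap
  have hα : α * (1 + s * x) = 1 := Ring.inverse_mul_cancel _ hu
  have hβ : (1 + x * s) * β = 1 := Ring.mul_inverse_cancel _ hu'
  have hMC' := mul_add_add_mul_self_eq_zero hDD hMC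
  constructor
  · rw [← Ring.lie_def, lie_inverse hu, lie_one_add_mul hDs hMC']
    linear_combination (norm := noncomm_ring) -(hα * (x * α))
  · rw [← Ring.lie_def, lie_inverse hu', lie_one_add_mul_swap hDs hMC']
    linear_combination (norm := noncomm_ring) β * x * hβ

/-- The differential of `α` and `β`: `Dα - αD = (αt - 1)xα` and `Dβ - βD = βx(1 - tβ)`. -/
theorem d_alpha_d_beta {R : Type*} [Ring R] (s t x D : R)
    (hss : s * s = 0) (hst : s * t = 0) (hts : t * s = 0) (htt : t * t = t)
    (hu : IsUnit (1 + s * x))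
    (hDD : D * D = 0) (hDs : D * s + s * D = 1 - t) (hDt : D * t = t * D)
    (hMC : (D + x) * (D + x) = 0) :
    let α := Ring.inverse (1 + s * x)
    let β := Ring.inverse (1 + x * s)
    D * α - α * D = (α * t - 1) * x * α ∧
      D * β - β * D = β * x * (1 - t * β) :=
  d_alpha_d_beta_general s t x D hu hDD hDs hMC
end

section
/- (Abstract Homological Perturbation Lemma.) Set s' := α·s, t' := α·t·β and D' := D + x. Then the perturbed data again satisfy the relations of an abstract Hodge decomposition: s'·s' = 0, s'·t' = 0, t'·s' = 0, t'·t' = t', D'·t' = t'·D', and D'·s' + s'·D' = 1 − t'. -/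
/-!
Write `u = 1 + s x`, `v = 1 + x s`, `α = u⁻¹`, `β = v⁻¹`. Since `s² = st = ts = 0`, the unit `u`
acts trivially on `s` and `t` from the right and `v` from the left, so `α`, `β` can be cancelled
against `s` and `t` in every product; together with the push-through identity `α s = s β` this
gives the four algebraic relations for `s' = α s` and `t' = α t β`. For the homotopy relation,
`(D + x)² = 0` turns `D' s + s D' = 1 - t + s x + x s` into `u (D' s) + (s D') v = u v - t`, and
multiplying by `α` on the left and `β` on the right gives `D' s' + s' D' = 1 - t'`. Finally
`D' t' = t' D'` holds for any square-zero `D'` and any `s'`, `t'` with `D' s' + s' D' = 1 - t'`.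
-/

section Perturbation

variable {R : Type*} [Ring R]

theorem commute_of_mul_self_eq_zero_of_add_eq_one_sub {D s t : R} (hDD : D * D = 0)
    (hDs : D * s + s * D = 1 - t) : Commute D t := by
  have ht : t = 1 - (D * s + s * D) := by rw [hDs]; abel
  rw [Commute, SemiconjBy, ht]
  linear_combination (norm := noncomm_ring) s * hDD - hDD * s

theorem isUnit_one_add_mul_swap {a b : R} (hu : IsUnit (1 + a * b)) : IsUnit (1 + b * a) := by
  have h₁ := Ring.inverse_mul_cancel _ hu
  have h₂ := Ring.mul_inverse_cancel _ hu
  refine ⟨⟨1 + b * a, 1 - b * Ring.inverse (1 + a * b) * a, ?_, ?_⟩, rfl⟩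
  · linear_combination (norm := noncomm_ring) -(b * h₂ * a)
  · linear_combination (norm := noncomm_ring) -(b * h₁ * a)

theorem inverse_one_add_mul_mul_comm {a b : R} (hu : IsUnit (1 + a * b)) :
    Ring.inverse (1 + a * b) * a = a * Ring.inverse (1 + b * a) := by
  have h₁ := Ring.inverse_mul_cancel _ hu
  have h₂ := Ring.mul_inverse_cancel _ (isUnit_one_add_mul_swap hu)
  linear_combination (norm := noncomm_ring)
    h₁ * (a * Ring.inverse (1 + b * a)) - (Ring.inverse (1 + a * b) * a) * h₂

theorem mul_inverse_one_add_mul_of_mul_eq_zero {a b y : R} (hu : IsUnit (1 + a * b))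
    (hy : y * a = 0) : y * Ring.inverse (1 + a * b) = y := by
  linear_combination (norm := noncomm_ring)
    y * Ring.mul_inverse_cancel _ hu - hy * (b * Ring.inverse (1 + a * b))

theorem inverse_one_add_mul_mul_of_mul_eq_zero {a b y : R} (hu : IsUnit (1 + a * b))
    (hy : b * y = 0) : Ring.inverse (1 + a * b) * y = y := by
  linear_combination (norm := noncomm_ring)
    Ring.inverse_mul_cancel _ hu * y - (Ring.inverse (1 + a * b) * a) * hy

theorem perturbed_homotopy {D s t x : R} (hDD : D * D = 0) (hDs : D * s + s * D = 1 - t)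
    (hMC : (D + x) * (D + x) = 0) (hu : IsUnit (1 + s * x)) :
    (D + x) * (Ring.inverse (1 + s * x) * s) + Ring.inverse (1 + s * x) * s * (D + x) =
      1 - Ring.inverse (1 + s * x) * t * Ring.inverse (1 + x * s) := by
  set α := Ring.inverse (1 + s * x)
  set β := Ring.inverse (1 + x * s)
  have hα : α * (1 + s * x) = 1 := Ring.inverse_mul_cancel _ hu
  have hβ : (1 + x * s) * β = 1 := Ring.mul_inverse_cancel _ (isUnit_one_add_mul_swap hu)
  have hαs : α * s = s * β := inverse_one_add_mul_mul_comm hu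
  have hK : (1 + s * x) * ((D + x) * s) + s * (D + x) * (1 + x * s) =
      (1 + s * x) * (1 + x * s) - t := by
    linear_combination (norm := noncomm_ring) hDs + s * hMC * s - s * hDD * s
  linear_combination (norm := noncomm_ring)
    α * hK * β - hα * ((D + x) * s * β)
      - (α * s * (D + x)) * hβ + hα * ((1 + x * s) * β) + hβ + (D + x) * hαs

end Perturbation

theorem abstract_HPL_general {R : Type*} [Ring R] (s t x D : R)
    (hss : s * s = 0) (hst : s * t = 0) (hts : t * s = 0) (htt : t * t = t)
    (hu : IsUnit (1 + s * x))
    (hDD : D * D = 0) (hDs : D * s + s * D = 1 - t)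
    (hMC : (D + x) * (D + x) = 0) :
    let α := Ring.inverse (1 + s * x)
    let β := Ring.inverse (1 + x * s)
    let s' := α * s
    let t' := α * t * β
    let D' := D + x
    s' * s' = 0 ∧ s' * t' = 0 ∧ t' * s' = 0 ∧ t' * t' = t' ∧
      D' * t' = t' * D' ∧ D' * s' + s' * D' = 1 - t' := by
  intro α β s' t' D'
  have hv : IsUnit (1 + x * s) := isUnit_one_add_mul_swap hu
  have hsα : s * α = s := mul_inverse_one_add_mul_of_mul_eq_zero hu hss
  have htα : t * α = t := mul_inverse_one_add_mul_of_mul_eq_zero hu hts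
  have hβs : β * s = s := inverse_one_add_mul_mul_of_mul_eq_zero hv hss
  have hαs : α * s = s * β := inverse_one_add_mul_mul_comm hu
  have hβ : β * (1 + x * s) = 1 := Ring.inverse_mul_cancel _ hv
  have homotopy : D' * s' + s' * D' = 1 - t' := perturbed_homotopy hDD hDs hMC hu
  refine ⟨?_, ?_, ?_, ?_, ?_, homotopy⟩
  · show α * s * (α * s) = 0
    linear_combination (norm := noncomm_ring) α * hsα * s + α * hss
  · show α * s * (α * t * β) = 0
    linear_combination (norm := noncomm_ring) α * hsα * (t * β) + α * hst * β
  · show α * t * β * (α * s) = 0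
    linear_combination (norm := noncomm_ring) (α * t * β) * hαs + α * t * hβs * β + α * hts * β
  · show α * t * β * (α * t * β) = α * t * β
    -- `t β α t = t`: expand `β = 1 - β x s`, then `t α = t`, `s α t = s t = 0`.
    linear_combination (norm := noncomm_ring)
      α * t * hβ * (α * t * β) + α * htα * (t * β) + α * htt * β
        - (α * t * β * x) * hsα * (t * β) - (α * t * β * x) * hst * β
  · exact commute_of_mul_self_eq_zero_of_add_eq_one_sub hMC homotopy

/-- Abstract Homological Perturbation Lemma: the perturbed data `s' = αs`, `t' = αtβ`,
`D' = D + x` again satisfy the relations of an abstract Hodge decomposition. -/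
theorem abstract_HPL {R : Type*} [Ring R] (s t x D : R)
    (hss : s * s = 0) (hst : s * t = 0) (hts : t * s = 0) (htt : t * t = t)
    (hu : IsUnit (1 + s * x))
    (hDD : D * D = 0) (hDs : D * s + s * D = 1 - t) (hDt : D * t = t * D)
    (hMC : (D + x) * (D + x) = 0) :
    let α := Ring.inverse (1 + s * x)
    let β := Ring.inverse (1 + x * s)
    let s' := α * s
    let t' := α * t * β
    let D' := D + x
    s' * s' = 0 ∧ s' * t' = 0 ∧ t' * s' = 0 ∧ t' * t' = t' ∧
      D' * t' = t' * D' ∧ D' * s' + s' * D' = 1 - t' :=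
  abstract_HPL_general s t x D hss hst hts htt hu hDD hDs hMC
end
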